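/- arXiv:2005.12604 — 6 statements merged into one kernel-verified Lean document; each statement's English description precedes it below -/
import Mathlib

section
/- Sufficient decrease property of the block Bregman proximal gradient step: Let V and W be finite-dimensional real inner product spaces, let f : V × W → ℝ be such that u ↦ f(u, w) is continuously differentiable for every fixed w ∈ W, let g : V → ℝ be convex and lower semicontinuous, let S ⊆ V be a nonempty closed convex set, and let h : V → ℝ be continuously differentiable and γ-strongly convex (γ > 0). Fix w ∈ W and suppose there exists R > 0 such that u ↦ R·h(u) − f(u, w) is convex. Let x ∈ S, α > 0, and let x⁺ ∈ S minimize z ↦ g(z) + ⟪∇₁f(x, w), z − x⟫ + (1/α)·D_h(z, x) over S, where ∇₁f denotes the gradient in the first variable. Then (f(x, w) + g(x)) − (f(x⁺, w) + g(x⁺)) ≥ (1/α − R)·D_h(x⁺, x); in particular, if 0 < α ≤ 1/R, then (f(x, w) + g(x)) − (f(x⁺, w) + g(x⁺)) ≥ (1/α − R)·(γ/2)·‖x⁺ − x‖². -/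
open scoped RealInnerProductSpace

/-!
Convexity of `R h - F` says that `D_F ≤ R D_h`, the descent lemma for `F` relative to `h`.
Comparing the prox-gradient objective at `x⁺` with its value `g x` at `x` gives
`g x⁺ + F'(x)(x⁺ - x) + D_h(x⁺, x) / α ≤ g x`, and adding the descent lemma yields the decrease
`(1/α - R) D_h(x⁺, x)`. Strong convexity of `h` means `D_h(y, x) ≥ γ/2 ‖y - x‖²`, since the Bregman
divergence of `‖·‖²` is `‖y - x‖²`.
-/

section NormedSpace

variable {E : Type*} [NormedAddCommGroup E] [NormedSpace ℝ E]

/-- The Bregman divergence `D_h(y, x)`, written with the Fréchet derivative. -/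
noncomputable def bregmanDiv (h : E → ℝ) (y x : E) : ℝ :=
  h y - h x - fderiv ℝ h x (y - x)

@[simp]
lemma bregmanDiv_self (h : E → ℝ) (x : E) : bregmanDiv h x x = 0 := by
  simp [bregmanDiv]

lemma bregmanDiv_sub {φ ψ : E → ℝ} {x : E} (hφ : DifferentiableAt ℝ φ x)
    (hψ : DifferentiableAt ℝ ψ x) (y : E) :
    bregmanDiv (fun u => φ u - ψ u) y x = bregmanDiv φ y x - bregmanDiv ψ y x := by
  simp only [bregmanDiv, fderiv_fun_sub hφ hψ, sub_apply]
  ring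

lemma bregmanDiv_const_mul {φ : E → ℝ} {x : E} (hφ : DifferentiableAt ℝ φ x) (c : ℝ) (y : E) :
    bregmanDiv (fun u => c * φ u) y x = c * bregmanDiv φ y x := by
  simp only [bregmanDiv, fderiv_const_mul hφ, smul_apply, smul_eq_mul]
  ring

lemma ConvexOn.bregmanDiv_nonneg {s : Set E} {φ : E → ℝ} (hφ : ConvexOn ℝ s φ) {x y : E}
    (hx : x ∈ s) (hy : y ∈ s) (hd : DifferentiableAt ℝ φ x) : 0 ≤ bregmanDiv φ y x := by
  let ℓ : ℝ →ᵃ[ℝ] E := AffineMap.lineMap x y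
  have hℓ0 : ℓ 0 = x := AffineMap.lineMap_apply_zero x y
  have hℓ1 : ℓ 1 = y := AffineMap.lineMap_apply_one x y
  have hderiv : HasDerivAt (φ ∘ ℓ) (fderiv ℝ φ x (y - x)) 0 :=
    hd.hasFDerivAt.comp_hasDerivAt_of_eq 0 AffineMap.hasDerivAt_lineMap hℓ0.symm
  have hslope := (hφ.comp_affineMap ℓ).le_slope_of_hasDerivAt (by simpa [hℓ0] using hx)
    (by simpa [hℓ1] using hy) one_pos hderiv
  rw [slope_def_field, Function.comp_apply, Function.comp_apply, hℓ0, hℓ1] at hslope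
  simp only [sub_zero, div_one] at hslope
  rw [bregmanDiv]
  linarith

lemma bregmanDiv_le_mul_bregmanDiv {F h : E → ℝ} {R : ℝ}
    (hrel : ConvexOn ℝ Set.univ (fun u => R * h u - F u)) {x : E}
    (hF : DifferentiableAt ℝ F x) (hh : DifferentiableAt ℝ h x) (y : E) :
    bregmanDiv F y x ≤ R * bregmanDiv h y x := by
  have := hrel.bregmanDiv_nonneg (Set.mem_univ x) (Set.mem_univ y) ((hh.const_mul R).sub hF)
  rw [bregmanDiv_sub (hh.const_mul R) hF, bregmanDiv_const_mul hh] at this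
  linarith

noncomputable def bregmanProxGradObjective (F g h : E → ℝ) (α : ℝ) (x z : E) : ℝ :=
  g z + fderiv ℝ F x (z - x) + 1 / α * bregmanDiv h z x

lemma bregmanProxGrad_sufficient_decrease {F g h : E → ℝ} {R α : ℝ}
    (hrel : ConvexOn ℝ Set.univ (fun u => R * h u - F u)) {S : Set E} {x xp : E} (hx : x ∈ S)
    (hF : DifferentiableAt ℝ F x) (hh : DifferentiableAt ℝ h x)
    (hmin : IsMinOn (bregmanProxGradObjective F g h α x) S xp) :
    (1 / α - R) * bregmanDiv h xp x ≤ (F x + g x) - (F xp + g xp) := by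
  have hstep : bregmanProxGradObjective F g h α x xp ≤ bregmanProxGradObjective F g h α x x :=
    hmin hx
  simp only [bregmanProxGradObjective, sub_self, map_zero, bregmanDiv_self,
    mul_zero, add_zero] at hstep
  have hdescent := bregmanDiv_le_mul_bregmanDiv hrel hF hh xp
  rw [bregmanDiv] at hdescent
  linarith

end NormedSpace

section InnerProductSpace

variable {E : Type*} [NormedAddCommGroup E] [InnerProductSpace ℝ E]

lemma bregmanDiv_norm_sq (y x : E) : bregmanDiv (fun u => ‖u‖ ^ 2) y x = ‖y - x‖ ^ 2 := by
  rw [bregmanDiv, fderiv_norm_sq_apply, smul_apply, innerSL_apply_apply,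
    norm_sub_sq_real, inner_sub_right, real_inner_self_eq_norm_sq, real_inner_comm, nsmul_eq_mul]
  ring

lemma mul_norm_sq_le_bregmanDiv {h : E → ℝ} {γ : ℝ}
    (hsc : ConvexOn ℝ Set.univ (fun u => h u - γ / 2 * ‖u‖ ^ 2)) {x : E}
    (hh : DifferentiableAt ℝ h x) (y : E) : γ / 2 * ‖y - x‖ ^ 2 ≤ bregmanDiv h y x := by
  have hsq : DifferentiableAt ℝ (fun u : E => ‖u‖ ^ 2) x :=
    (hasStrictFDerivAt_norm_sq x).hasFDerivAt.differentiableAt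
  have := hsc.bregmanDiv_nonneg (Set.mem_univ x) (Set.mem_univ y) (hh.sub (hsq.const_mul _))
  rw [bregmanDiv_sub hh (hsq.const_mul _), bregmanDiv_const_mul hsq, bregmanDiv_norm_sq] at this
  linarith

lemma bregmanDiv_eq_sub_inner_gradient [CompleteSpace E] (h : E → ℝ) (y x : E) :
    bregmanDiv h y x = h y - h x - ⟪gradient h x, y - x⟫ := by
  rw [bregmanDiv, inner_gradient_left]

end InnerProductSpace

theorem stmt2_general {V W : Type*} [NormedAddCommGroup V] [InnerProductSpace ℝ V]
    [FiniteDimensional ℝ V]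
    (f : V × W → ℝ) (hf : ∀ w : W, ContDiff ℝ 1 (fun u : V => f (u, w)))
    (g : V → ℝ)
    (S : Set V)
    (h : V → ℝ) (hh : ContDiff ℝ 1 h)
    (γ : ℝ)
    (hh_sc : ConvexOn ℝ Set.univ (fun x => h x - γ / 2 * ‖x‖ ^ 2))
    (w : W) (R : ℝ)
    (hrel : ConvexOn ℝ Set.univ (fun u : V => R * h u - f (u, w)))
    (x : V) (hx : x ∈ S) (α : ℝ) (hα : 0 < α)
    (xp : V)
    (hmin : ∀ z ∈ S,
      g xp + ⟪gradient (fun u : V => f (u, w)) x, xp - x⟫ +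
          (1 / α) * (h xp - h x - ⟪gradient h x, xp - x⟫)
        ≤ g z + ⟪gradient (fun u : V => f (u, w)) x, z - x⟫ +
          (1 / α) * (h z - h x - ⟪gradient h x, z - x⟫)) :
    (f (x, w) + g x) - (f (xp, w) + g xp)
        ≥ (1 / α - R) * (h xp - h x - ⟪gradient h x, xp - x⟫) ∧
    (α ≤ 1 / R →
      (f (x, w) + g x) - (f (xp, w) + g xp)
        ≥ (1 / α - R) * (γ / 2) * ‖xp - x‖ ^ 2) := by
  have hfx : DifferentiableAt ℝ (fun u : V => f (u, w)) x :=
    (hf w).differentiable one_ne_zero x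
  have hhx : DifferentiableAt ℝ h x := hh.differentiable one_ne_zero x
  have hstep : IsMinOn (bregmanProxGradObjective (fun u => f (u, w)) g h α x) S xp := isMinOn_iff.mpr fun z hz => by
    simpa only [bregmanProxGradObjective, bregmanDiv_eq_sub_inner_gradient, inner_gradient_left]
      using hmin z hz
  have hdecrease := bregmanProxGrad_sufficient_decrease hrel hx hfx hhx hstep
  rw [← bregmanDiv_eq_sub_inner_gradient]
  refine ⟨hdecrease, fun hαR => ?_⟩
  have hR : 0 < R := one_div_pos.mp (hα.trans_le hαR)
  have hcoef : 0 ≤ 1 / α - R := sub_nonneg.mpr ((le_one_div hα hR).mp hαR)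
  calc (1 / α - R) * (γ / 2) * ‖xp - x‖ ^ 2
      = (1 / α - R) * (γ / 2 * ‖xp - x‖ ^ 2) := by ring
    _ ≤ (1 / α - R) * bregmanDiv h xp x :=
      mul_le_mul_of_nonneg_left (mul_norm_sq_le_bregmanDiv hh_sc hhx xp) hcoef
    _ ≤ _ := hdecrease

/-- Sufficient decrease property of the block Bregman proximal gradient step. -/
theorem stmt2 {V W : Type*} [NormedAddCommGroup V] [InnerProductSpace ℝ V]
    [FiniteDimensional ℝ V] [NormedAddCommGroup W] [InnerProductSpace ℝ W]
    [FiniteDimensional ℝ W]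
    (f : V × W → ℝ) (hf : ∀ w : W, ContDiff ℝ 1 (fun u : V => f (u, w)))
    (g : V → ℝ) (hg_conv : ConvexOn ℝ Set.univ g) (hg_lsc : LowerSemicontinuous g)
    (S : Set V) (hS_ne : S.Nonempty) (hS_closed : IsClosed S) (hS_conv : Convex ℝ S)
    (h : V → ℝ) (hh : ContDiff ℝ 1 h)
    (γ : ℝ) (hγ : 0 < γ)
    (hh_sc : ConvexOn ℝ Set.univ (fun x => h x - γ / 2 * ‖x‖ ^ 2))
    (w : W) (R : ℝ) (hR : 0 < R)
    (hrel : ConvexOn ℝ Set.univ (fun u : V => R * h u - f (u, w)))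
    (x : V) (hx : x ∈ S) (α : ℝ) (hα : 0 < α)
    (xp : V) (hxp : xp ∈ S)
    (hmin : ∀ z ∈ S,
      g xp + ⟪gradient (fun u : V => f (u, w)) x, xp - x⟫ +
          (1 / α) * (h xp - h x - ⟪gradient h x, xp - x⟫)
        ≤ g z + ⟪gradient (fun u : V => f (u, w)) x, z - x⟫ +
          (1 / α) * (h z - h x - ⟪gradient h x, z - x⟫)) :
    (f (x, w) + g x) - (f (xp, w) + g xp)
        ≥ (1 / α - R) * (h xp - h x - ⟪gradient h x, xp - x⟫) ∧
    (α ≤ 1 / R →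
      (f (x, w) + g x) - (f (xp, w) + g xp)
        ≥ (1 / α - R) * (γ / 2) * ‖xp - x‖ ^ 2) :=
  stmt2_general f hf g S h hh γ hh_sc w R hrel x hx α hα xp hmin
end

section
/- Asymptotic vanishing of steps and convergence of energies under the non-monotone decrease condition: Let V be a finite-dimensional real inner product space, let K ⊆ V, let E : V → ℝ be Lipschitz continuous on K and bounded below, let σ > 0, M ∈ ℕ, and let (X^k)_{k∈ℕ} be a sequence contained in K. For each k define a_k = max{ E(X^j) : max(k − M, 0) ≤ j ≤ k }. If for all k one has a_k − E(X^{k+1}) ≥ σ‖X^{k+1} − X^k‖², then ‖X^{k+1} − X^k‖ → 0 as k → ∞, and there exists E* ∈ ℝ, E* > −∞, such that E(X^k) → E* as k → ∞. -/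
/-!
The windowed maxima `a_k` are non-increasing (the newest value `E(X^{k+1})` is at most `a_k`) and
bounded below, so they converge to some `c`. Pick `l_k ∈ [k - M, k]` with `E(X^{l_k}) = a_k`.
The decrease condition at `l_k - j - 1` forces the step into `l_k - j` to vanish once
`E(X^{l_k - j}) → c`, and then the Lipschitz bound gives `E(X^{l_k - j - 1}) → c`. After `M + 1`
such steps every index `n` is of the form `l_k - j` with `j ≤ M`, so `E(X^n) → c`, and the
decrease condition at `n` finally gives `‖X^{n+1} - X^n‖ → 0`.
-/

open Filter Topology

/-- The windowed maximum `a_k = max{ E(X^j) : max(k − M, 0) ≤ j ≤ k }`. -/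
noncomputable def windowMax (e : ℕ → ℝ) (M k : ℕ) : ℝ :=
  (Finset.Icc (k - M) k).sup' (Finset.nonempty_Icc.mpr (Nat.sub_le k M)) e

lemma tendsto_selection_of_finite {ι α β : Type*} {F : Filter α} {G : Filter β} {S : Set ι}
    (hS : S.Finite) (f : ι → α → β) (hf : ∀ i ∈ S, Tendsto (f i) F G) (g : α → ι)
    (hg : ∀ a, g a ∈ S) : Tendsto (fun a => f (g a) a) F G := by
  intro U hU
  change ∀ᶠ a in F, f (g a) a ∈ U
  filter_upwards [(eventually_all_finite hS).2 fun i hi => hf i hi hU] with a ha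
  exact ha (g a) (hg a)

lemma le_windowMax (e : ℕ → ℝ) {M k j : ℕ} (hkj : k - M ≤ j) (hjk : j ≤ k) :
    e j ≤ windowMax e M k :=
  Finset.le_sup' e (Finset.mem_Icc.mpr ⟨hkj, hjk⟩)

lemma exists_eq_windowMax (e : ℕ → ℝ) (M k : ℕ) :
    ∃ j, k - M ≤ j ∧ j ≤ k ∧ e j = windowMax e M k := by
  obtain ⟨j, hj, hmax⟩ := Finset.exists_mem_eq_sup' (Finset.nonempty_Icc.mpr (Nat.sub_le k M)) e
  exact ⟨j, (Finset.mem_Icc.mp hj).1, (Finset.mem_Icc.mp hj).2, hmax.symm⟩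

section windowMax

variable {e s : ℕ → ℝ} {M : ℕ}

lemma antitone_windowMax (h : ∀ k, e (k + 1) ≤ windowMax e M k) :
    Antitone (windowMax e M) := by
  refine antitone_nat_of_succ_le fun k => Finset.sup'_le _ _ fun j hj => ?_
  obtain ⟨hlo, hhi⟩ := Finset.mem_Icc.mp hj
  rcases Nat.lt_or_ge j (k + 1) with hjk | hjk
  · exact le_windowMax e (by omega) (by omega)
  · exact le_antisymm hhi hjk ▸ h k

lemma exists_tendsto_windowMax (h : ∀ k, e (k + 1) ≤ windowMax e M k)
    (hbdd : BddBelow (Set.range e)) : ∃ c, Tendsto (windowMax e M) atTop (𝓝 c) := by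
  obtain ⟨B, hB⟩ := hbdd
  have hbdd' : BddBelow (Set.range (windowMax e M)) :=
    ⟨B, Set.forall_mem_range.2 fun k =>
      (hB ⟨k, rfl⟩).trans (le_windowMax e (Nat.sub_le k M) le_rfl)⟩
  exact ⟨_, tendsto_atTop_ciInf (antitone_windowMax h) hbdd'⟩

variable {σ L c : ℝ} {ι : Type*} {F : Filter ι} {n : ι → ℕ}

lemma tendsto_step_of_tendsto_succ (hσ : 0 < σ)
    (hdec : ∀ k, σ * s k ^ 2 ≤ windowMax e M k - e (k + 1))
    (ha : Tendsto (windowMax e M) atTop (𝓝 c)) (hn : Tendsto n F atTop)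
    (he : Tendsto (fun i => e (n i + 1)) F (𝓝 c)) :
    Tendsto (fun i => s (n i)) F (𝓝 0) := by
  have hgap : Tendsto (fun i => √((windowMax e M (n i) - e (n i + 1)) / σ)) F (𝓝 0) := by
    simpa using (((ha.comp hn).sub he).div_const σ).sqrt
  refine squeeze_zero_norm (fun i => Real.abs_le_sqrt ?_) hgap
  rw [le_div_iff₀ hσ, mul_comm]
  exact hdec (n i)

lemma tendsto_of_tendsto_succ (hLip : ∀ k, |e (k + 1) - e k| ≤ L * s k)
    (hs : Tendsto (fun i => s (n i)) F (𝓝 0)) (he : Tendsto (fun i => e (n i + 1)) F (𝓝 c)) :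
    Tendsto (fun i => e (n i)) F (𝓝 c) := by
  have hdiff : Tendsto (fun i => e (n i + 1) - e (n i)) F (𝓝 0) :=
    squeeze_zero_norm (fun i => hLip (n i)) (by simpa using hs.const_mul L)
  simpa using he.sub hdiff

lemma tendsto_argmax_sub (hσ : 0 < σ)
    (hLip : ∀ k, |e (k + 1) - e k| ≤ L * s k)
    (hdec : ∀ k, σ * s k ^ 2 ≤ windowMax e M k - e (k + 1))
    (ha : Tendsto (windowMax e M) atTop (𝓝 c)) {l : ℕ → ℕ} (hl_ge : ∀ k, k - M ≤ l k)
    (hl : ∀ k, e (l k) = windowMax e M k) (j : ℕ) :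
    Tendsto (fun k => e (l k - j)) atTop (𝓝 c) := by
  induction j with
  | zero => simpa [hl] using ha
  | succ j ih =>
    have hn : Tendsto (fun k => l k - (j + 1)) atTop atTop :=
      tendsto_atTop_mono (fun k => by have := hl_ge k; omega)
        (tendsto_sub_atTop_nat (M + (j + 1)))
    have he : Tendsto (fun k => e (l k - (j + 1) + 1)) atTop (𝓝 c) := by
      refine ih.congr' ?_
      filter_upwards [eventually_ge_atTop (M + (j + 1))] with k hk
      have := hl_ge k
      congr 1
      omega
    exact tendsto_of_tendsto_succ hLip (tendsto_step_of_tendsto_succ hσ hdec ha hn he) he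

theorem tendsto_of_windowMax_decrease (hσ : 0 < σ)
    (hLip : ∀ k, |e (k + 1) - e k| ≤ L * s k) (hbdd : BddBelow (Set.range e))
    (hdec : ∀ k, σ * s k ^ 2 ≤ windowMax e M k - e (k + 1)) :
    Tendsto s atTop (𝓝 0) ∧ ∃ c, Tendsto e atTop (𝓝 c) := by
  have hsucc : ∀ k, e (k + 1) ≤ windowMax e M k := fun k => by
    nlinarith [hdec k, sq_nonneg (s k)]
  obtain ⟨c, ha⟩ := exists_tendsto_windowMax hsucc hbdd
  choose l hl_ge hl_le hl using exists_eq_windowMax e M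
  have hlag := tendsto_argmax_sub hσ hLip hdec ha hl_ge hl
  -- Every `n` equals `l (n + M) - j` for the lag `j = l (n + M) - n ≤ M`.
  have he : Tendsto e atTop (𝓝 c) := by
    refine (tendsto_selection_of_finite (Set.finite_Iic M)
      (fun j n => e (l (n + M) - j)) (fun j _ => (hlag j).comp (tendsto_add_atTop_nat M))
      (fun n => l (n + M) - n) (fun n => Set.mem_Iic.2 (by have := hl_le (n + M); omega))).congr
      fun n => ?_
    have := hl_ge (n + M)
    congr 1
    omega
  exact ⟨tendsto_step_of_tendsto_succ hσ hdec ha tendsto_id (he.comp (tendsto_add_atTop_nat 1)),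
    c, he⟩

end windowMax

theorem stmt6_general {V : Type*} [NormedAddCommGroup V]
    (K : Set V) (E : V → ℝ) (L : ℝ)
    (hLip : ∀ x ∈ K, ∀ y ∈ K, |E x - E y| ≤ L * ‖x - y‖)
    (hbdd : BddBelow (Set.range E))
    (σ : ℝ) (hσ : 0 < σ) (M : ℕ)
    (X : ℕ → V) (hX : ∀ k, X k ∈ K)
    (hdec : ∀ k, windowMax (fun j => E (X j)) M k - E (X (k + 1))
      ≥ σ * ‖X (k + 1) - X k‖ ^ 2) :
    Filter.Tendsto (fun k => ‖X (k + 1) - X k‖) Filter.atTop (nhds 0) ∧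
      ∃ Estar : ℝ, Filter.Tendsto (fun k => E (X k)) Filter.atTop (nhds Estar) :=
  tendsto_of_windowMax_decrease hσ
    (fun k => hLip _ (hX (k + 1)) _ (hX k))
    (hbdd.mono (Set.range_comp_subset_range X E)) hdec

/-- Asymptotic vanishing of steps and convergence of energies under the non-monotone
decrease condition `a_k − E(X^{k+1}) ≥ σ‖X^{k+1} − X^k‖²`. -/
theorem stmt6 {V : Type*} [NormedAddCommGroup V] [InnerProductSpace ℝ V]
    [FiniteDimensional ℝ V]
    (K : Set V) (E : V → ℝ) (L : ℝ) (hL : 0 ≤ L)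
    (hLip : ∀ x ∈ K, ∀ y ∈ K, |E x - E y| ≤ L * ‖x - y‖)
    (hbdd : BddBelow (Set.range E))
    (σ : ℝ) (hσ : 0 < σ) (M : ℕ)
    (X : ℕ → V) (hX : ∀ k, X k ∈ K)
    (hdec : ∀ k, windowMax (fun j => E (X j)) M k - E (X (k + 1))
      ≥ σ * ‖X (k + 1) - X k‖ ^ 2) :
    Filter.Tendsto (fun k => ‖X (k + 1) - X k‖) Filter.atTop (nhds 0) ∧
      ∃ Estar : ℝ, Filter.Tendsto (fun k => E (X k)) Filter.atTop (nhds Estar) :=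
  stmt6_general K E L hLip hbdd σ hσ M X hX hdec
end

section
/- Subsequence convergence to critical points: Let V be a finite-dimensional real inner product space, E : V → ℝ continuous, and define the subdifferential ∂E(x) = { u ∈ V : E(y) ≥ E(x) + ⟪u, y − x⟫ for all y ∈ V }. Let (X^k)_{k∈ℕ} be a bounded sequence in V such that ‖X^{k+1} − X^k‖ → 0, and suppose there exist constants C > 0 and T ∈ ℕ, T ≥ 1, such that for every k > 3T there exists u_k ∈ ∂E(X^k) with ‖u_k‖ ≤ C · Σ_{l = k−3T+1}^{k} ‖X^l − X^{l−1}‖. Then every limit point X* of (X^k) satisfies 0 ∈ ∂E(X*). -/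
open scoped RealInnerProductSpace
open Filter Topology

/-! The subgradients `u_k ∈ ∂E(X^k)` are bounded by a window of `3T` consecutive step lengths,
so they tend to `0`. Along a subsequence `X^{φ j} → X*`, continuity of `E` and of the inner
product lets the subgradient inequalities `E y ≥ E(X^{φ j}) + ⟪u_{φ j}, y - X^{φ j}⟫` pass to
the limit `E y ≥ E X*`. -/

section Subdifferential

variable {V : Type*} [NormedAddCommGroup V] [InnerProductSpace ℝ V]

def subdifferential (E : V → ℝ) (x : V) : Set V :=
  {u | ∀ y, E x + ⟪u, y - x⟫ ≤ E y}

theorem mem_subdifferential_of_tendsto {ι : Type*} {l : Filter ι} [l.NeBot] {E : V → ℝ}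
    (hE : Continuous E) {x : ι → V} {u : ι → V} {x₀ u₀ : V}
    (hx : Tendsto x l (𝓝 x₀)) (hu : Tendsto u l (𝓝 u₀))
    (hmem : ∀ᶠ i in l, u i ∈ subdifferential E (x i)) :
    u₀ ∈ subdifferential E x₀ := fun y =>
  have hlim : Tendsto (fun i => E (x i) + ⟪u i, y - x i⟫) l (𝓝 (E x₀ + ⟪u₀, y - x₀⟫)) :=
    ((hE.tendsto x₀).comp hx).add (hu.inner (tendsto_const_nhds.sub hx))
  le_of_tendsto hlim (hmem.mono fun _ hi => hi y)

end Subdifferential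

theorem tendsto_sum_Icc_sub_add_one_self {M : Type*} [AddCommMonoid M] [TopologicalSpace M]
    [ContinuousAdd M] {a : ℕ → M} (ha : Tendsto a atTop (𝓝 0)) (m : ℕ) :
    Tendsto (fun k => ∑ l ∈ Finset.Icc (k - m + 1) k, a l) atTop (𝓝 0) := by
  have hwindow : ∀ᶠ k in atTop,
      ∑ i ∈ Finset.range m, a (k - m + 1 + i) = ∑ l ∈ Finset.Icc (k - m + 1) k, a l := by
    filter_upwards [eventually_ge_atTop m] with k hk
    rw [← Finset.Ico_add_one_right_eq_Icc, Finset.sum_Ico_eq_sum_range,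
      show k + 1 - (k - m + 1) = m by omega]
  refine Tendsto.congr' hwindow ?_
  simpa using tendsto_finsetSum (Finset.range m) fun i _ =>
    ha.comp (tendsto_atTop_mono (fun k => by omega) (tendsto_sub_atTop_nat m))

theorem stmt8_general {V : Type*} [NormedAddCommGroup V] [InnerProductSpace ℝ V]
    (E : V → ℝ) (hE : Continuous E)
    (X : ℕ → V)
    (hstep : Filter.Tendsto (fun k => ‖X (k + 1) - X k‖) Filter.atTop (nhds 0))
    (C : ℝ) (T : ℕ)
    (hsub : ∀ k, 3 * T < k → ∃ u : V,
      (∀ y : V, E y ≥ E (X k) + ⟪u, y - X k⟫) ∧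
      ‖u‖ ≤ C * ∑ l ∈ Finset.Icc (k - 3 * T + 1) k, ‖X l - X (l - 1)‖)
    (Xstar : V) (φ : ℕ → ℕ) (hφ : StrictMono φ)
    (hlim : Filter.Tendsto (fun j => X (φ j)) Filter.atTop (nhds Xstar)) :
    ∀ y : V, E y ≥ E Xstar + ⟪(0 : V), y - Xstar⟫ := by
  choose! u hu_mem hu_norm using hsub
  have hwindow : Tendsto (fun k => C * ∑ l ∈ Finset.Icc (k - 3 * T + 1) k, ‖X l - X (l - 1)‖)
      atTop (𝓝 0) := by
    have hdiff : Tendsto (fun l => ‖X l - X (l - 1)‖) atTop (𝓝 0) :=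
      (tendsto_add_atTop_iff_nat 1).mp (by simpa using hstep)
    simpa using (tendsto_sum_Icc_sub_add_one_self hdiff (3 * T)).const_mul C
  have hu : Tendsto u atTop (𝓝 0) := by
    refine tendsto_zero_iff_norm_tendsto_zero.mpr
      (squeeze_zero' (.of_forall fun _ => norm_nonneg _) ?_ hwindow)
    filter_upwards [eventually_gt_atTop (3 * T)] with k hk using hu_norm k hk
  have hφ_large : ∀ᶠ j in atTop, 3 * T < φ j := hφ.tendsto_atTop.eventually_gt_atTop _
  exact mem_subdifferential_of_tendsto hE hlim (hu.comp hφ.tendsto_atTop)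
    (hφ_large.mono fun j hj => hu_mem (φ j) hj)

/-- Subsequence convergence to critical points: under vanishing steps and the relative-error
bound on subgradients, every limit point `X*` of the sequence satisfies `0 ∈ ∂E(X*)`. -/
theorem stmt8 {V : Type*} [NormedAddCommGroup V] [InnerProductSpace ℝ V]
    [FiniteDimensional ℝ V]
    (E : V → ℝ) (hE : Continuous E)
    (X : ℕ → V) (hXbdd : Bornology.IsBounded (Set.range X))
    (hstep : Filter.Tendsto (fun k => ‖X (k + 1) - X k‖) Filter.atTop (nhds 0))
    (C : ℝ) (hC : 0 < C) (T : ℕ) (hT : 1 ≤ T)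
    (hsub : ∀ k, 3 * T < k → ∃ u : V,
      (∀ y : V, E y ≥ E (X k) + ⟪u, y - X k⟫) ∧
      ‖u‖ ≤ C * ∑ l ∈ Finset.Icc (k - 3 * T + 1) k, ‖X l - X (l - 1)‖)
    (Xstar : V) (φ : ℕ → ℕ) (hφ : StrictMono φ)
    (hlim : Filter.Tendsto (fun j => X (φ j)) Filter.atTop (nhds Xstar)) :
    ∀ y : V, E y ≥ E Xstar + ⟪(0 : V), y - Xstar⟫ :=
  stmt8_general E hE X hstep C T hsub Xstar φ hφ hlim
end

section
/- Whole-sequence convergence under a Kurdyka–Łojasiewicz-type inequality: Let V be a finite-dimensional real inner product space, E : V → ℝ continuous and bounded below, and define ∂E(x) = { u ∈ V : E(y) ≥ E(x) + ⟪u, y − x⟫ for all y ∈ V }. Let (X^k)_{k∈ℕ} be a bounded sequence in V, σ > 0, C > 0, T ∈ ℕ with T ≥ 1, E* ∈ ℝ, η > 0, k₀ ∈ ℕ with k₀ > 3T, and ψ : [0, η) → ℝ continuous with ψ(0) = 0, continuously differentiable, concave, and ψ' > 0 on (0, η). Assume: (i) sufficient decrease, E(X^k) − E(X^{k+1}) ≥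 σ‖X^{k+1} − X^k‖² for all k; (ii) relative error, for every k > 3T there exists u_k ∈ ∂E(X^k) with ‖u_k‖ ≤ C · Σ_{l = k−3T+1}^{k} ‖X^l − X^{l−1}‖; (iii) E(X^k) → E* with E* < E(X^k) < E* + η for all k > k₀; (iv) KL inequality, ψ'(E(X^k) − E*) · ‖u‖ ≥ 1 for all u ∈ ∂E(X^k) and all k > k₀. Then Σ_{k=0}^{∞} ‖X^{k+1} − X^k‖ < ∞, and consequently there exists X* ∈ V with X^k → X*. -/
open scoped RealInnerProductSpace

open Finset

/-!
Write `a k = ‖X (k+1) - X k‖` and `e k = E (X k) - E*`. Concavity of `ψ` gives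
`ψ'(e k) (e k - e (k+1)) ≤ ψ (e k) - ψ (e (k+1))`; combined with sufficient decrease, the KL
inequality and the relative-error bound this yields
`a k ^ 2 ≤ (C/σ) (ψ (e k) - ψ (e (k+1))) · ∑_{k-3T ≤ j < k} a j`.
With `φ k = (C/σ) ψ (e k)` and `m = 3T`, weighted AM–GM turns this into
`2(m+1) a k ≤ (m+1)² (φ k - φ (k+1)) + ∑_{k-m ≤ j < k} a j`. Each `a j` lies in at most `m` of these windows, so after summing the window
terms cost at most `m/(m+1) < 1` times the partial sum and can be absorbed, while the `φ` terms
telescope. The partial sums of `a` are therefore bounded, so `X` is Cauchy and converges.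
-/

theorem ConcaveOn.mul_sub_le_sub_of_hasDerivAt {ψ : ℝ → ℝ} {S : Set ℝ} {x y d : ℝ}
    (hψ : ConcaveOn ℝ S ψ) (hx : x ∈ S) (hy : y ∈ S) (hxy : x ≤ y) (hd : HasDerivAt ψ d y) :
    d * (y - x) ≤ ψ y - ψ x := by
  rcases hxy.eq_or_lt with rfl | hlt
  · simp
  · have := hψ.le_slope_of_hasDerivAt hx hy hlt hd
    rwa [slope_def_field, le_div_iff₀ (sub_pos.2 hlt)] at this

theorem ConcaveOn.nonneg_of_hasDerivAt {ψ : ℝ → ℝ} {η s d : ℝ}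
    (hψ : ConcaveOn ℝ (Set.Ico 0 η) ψ) (hψ0 : ψ 0 = 0) (hs : s ∈ Set.Ioo 0 η)
    (hd : HasDerivAt ψ d s) (hd_pos : 0 < d) : 0 ≤ ψ s := by
  have := hψ.mul_sub_le_sub_of_hasDerivAt ⟨le_rfl, hs.1.trans hs.2⟩
    (Set.Ioo_subset_Ico_self hs) hs.1.le hd
  rw [hψ0, sub_zero, sub_zero] at this
  exact (mul_pos hd_pos hs.1).le.trans this

theorem sum_range_sum_Ico_sub_le (a : ℕ → ℝ) (ha : ∀ k, 0 ≤ a k) (m N : ℕ) :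
    ∑ k ∈ range N, ∑ j ∈ Ico (k - m) k, a j ≤ m * ∑ j ∈ range N, a j := by
  rw [sum_comm' (t' := range N) (s' := fun j => Ico (j + 1) (min N (j + m + 1)))
    (fun k j => by simp only [mem_range, mem_Ico]; omega), mul_sum]
  refine sum_le_sum fun j _ => ?_
  rw [sum_const, Nat.card_Ico, nsmul_eq_mul]
  exact mul_le_mul_of_nonneg_right (by exact_mod_cast (by omega)) (ha j)

theorem summable_of_sq_le_mul_sum_Ico {a φ : ℕ → ℝ} {m K : ℕ} (ha : ∀ k, 0 ≤ a k)
    (hφ_nonneg : ∀ k, K ≤ k → 0 ≤ φ k) (hφ_anti : ∀ k, K ≤ k → φ (k + 1) ≤ φ k)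
    (h : ∀ k, K ≤ k → a k ^ 2 ≤ (φ k - φ (k + 1)) * ∑ j ∈ Ico (k - m) k, a j) :
    Summable a := by
  set S : ℕ → ℝ := fun k => ∑ j ∈ Ico (k - m) k, a j
  have hamgm : ∀ k, K ≤ k → 2 * (m + 1) * a k ≤ (m + 1) ^ 2 * (φ k - φ (k + 1)) + S k := by
    intro k hk
    have hd : 0 ≤ φ k - φ (k + 1) := sub_nonneg.2 (hφ_anti k hk)
    have hS : 0 ≤ S k := sum_nonneg fun j _ => ha j
    refine (pow_le_pow_iff_left₀ (mul_nonneg (by positivity) (ha k))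
      (add_nonneg (mul_nonneg (by positivity) hd) hS) two_ne_zero).1 ?_
    calc (2 * (m + 1) * a k) ^ 2 = 4 * (m + 1) ^ 2 * a k ^ 2 := by ring
      _ ≤ 4 * (m + 1) ^ 2 * ((φ k - φ (k + 1)) * S k) := by gcongr; exact h k hk
      _ = 4 * ((m + 1) ^ 2 * (φ k - φ (k + 1))) * S k := by ring
      _ ≤ _ := four_mul_le_sq_add _ _
  have hbound : ∀ N, K ≤ N → ∑ j ∈ range N, a j ≤ 2 * ∑ j ∈ range K, a j + (m + 1) * φ K := by
    intro N hN
    have hstep := sum_le_sum fun k (hk : k ∈ Ico K N) => hamgm k (mem_Ico.1 hk).1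
    have htel : ∑ k ∈ Ico K N, (φ k - φ (k + 1)) = φ K - φ N := by
      rw [← neg_sub, ← sum_Ico_sub φ hN, ← sum_neg_distrib]; simp
    have hwin : ∑ k ∈ Ico K N, S k ≤ m * ∑ j ∈ range N, a j :=
      (sum_le_sum_of_subset_of_nonneg
        (by rw [range_eq_Ico]; exact Ico_subset_Ico_left (Nat.zero_le K))
        fun k _ _ => sum_nonneg fun j _ => ha j).trans (sum_range_sum_Ico_sub_le a ha m N)
    rw [← mul_sum, sum_add_distrib, ← mul_sum, htel] at hstep
    rw [← sum_range_add_sum_Ico _ hN] at hwin ⊢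
    have := hφ_nonneg N hN
    have := sum_nonneg fun j (_ : j ∈ range K) => ha j
    have := sum_nonneg fun j (_ : j ∈ Ico K N) => ha j
    nlinarith
  exact summable_of_sum_range_le ha fun n =>
    (sum_le_sum_of_subset_of_nonneg (range_subset_range.2 (le_max_left n K))
      fun j _ _ => ha j).trans (hbound _ (le_max_right n K))

theorem sq_le_of_descent_of_kl {σ C a Δe Δψ d g S : ℝ} (hσ : 0 < σ) (hd : 0 < d)
    (hdec : σ * a ^ 2 ≤ Δe) (hconc : d * Δe ≤ Δψ) (hkl : 1 ≤ d * g) (hg : g ≤ C * S) :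
    a ^ 2 ≤ C / σ * Δψ * S := by
  have hΔe : 0 ≤ Δe := (by positivity : 0 ≤ σ * a ^ 2).trans hdec
  have hCS : 0 ≤ C * S := (pos_of_mul_pos_right (zero_lt_one.trans_le hkl) hd.le).le.trans hg
  rw [show C / σ * Δψ * S = Δψ * (C * S) / σ by ring, le_div_iff₀ hσ]
  calc a ^ 2 * σ ≤ Δe := by linarith
    _ ≤ Δe * (d * g) := le_mul_of_one_le_right hΔe hkl
    _ ≤ Δe * (d * (C * S)) := by gcongr
    _ = d * Δe * (C * S) := by ring
    _ ≤ Δψ * (C * S) := mul_le_mul_of_nonneg_right hconc hCS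

theorem stmt9_general {V : Type*} [NormedAddCommGroup V] [InnerProductSpace ℝ V]
    [FiniteDimensional ℝ V]
    (E : V → ℝ)
    (X : ℕ → V)
    (σ C : ℝ) (hσ : 0 < σ) (hC : 0 < C)
    (T : ℕ)
    (Estar η : ℝ)
    (k₀ : ℕ) (hk₀ : 3 * T < k₀)
    (ψ dψ : ℝ → ℝ)
    (hψ0 : ψ 0 = 0)
    (hψderiv : ∀ t ∈ Set.Ioo (0 : ℝ) η, HasDerivAt ψ (dψ t) t)
    (hψconc : ConcaveOn ℝ (Set.Ico 0 η) ψ)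
    (hψpos : ∀ t ∈ Set.Ioo (0 : ℝ) η, 0 < dψ t)
    -- (i) sufficient decrease
    (hdec : ∀ k, E (X k) - E (X (k + 1)) ≥ σ * ‖X (k + 1) - X k‖ ^ 2)
    -- (ii) relative error
    (hrelerr : ∀ k, 3 * T < k → ∃ u : V,
      (∀ y : V, E y ≥ E (X k) + ⟪u, y - X k⟫) ∧
      ‖u‖ ≤ C * ∑ l ∈ Finset.Icc (k - 3 * T + 1) k, ‖X l - X (l - 1)‖)
    -- (iii) energy convergence into the band
    (hEband : ∀ k, k₀ < k → Estar < E (X k) ∧ E (X k) < Estar + η)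
    -- (iv) KL inequality
    (hKL : ∀ k, k₀ < k → ∀ u : V, (∀ y : V, E y ≥ E (X k) + ⟪u, y - X k⟫) →
      dψ (E (X k) - Estar) * ‖u‖ ≥ 1) :
    (Summable fun k => ‖X (k + 1) - X k‖) ∧
      ∃ Xstar : V, Filter.Tendsto X Filter.atTop (nhds Xstar) := by
  set a : ℕ → ℝ := fun k => ‖X (k + 1) - X k‖
  set e : ℕ → ℝ := fun k => E (X k) - Estar
  have he : ∀ k, k₀ < k → e k ∈ Set.Ioo 0 η := fun k hk =>
    ⟨sub_pos.2 (hEband k hk).1, sub_lt_iff_lt_add'.2 (hEband k hk).2⟩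
  have hdescent : ∀ k, σ * a k ^ 2 ≤ e k - e (k + 1) := fun k => by
    simp only [a, e]; linarith [hdec k]
  have he_anti : ∀ k, e (k + 1) ≤ e k := fun k =>
    sub_nonneg.1 ((by positivity : 0 ≤ σ * a k ^ 2).trans (hdescent k))
  have hconc : ∀ k, k₀ < k → dψ (e k) * (e k - e (k + 1)) ≤ ψ (e k) - ψ (e (k + 1)) :=
    fun k hk => hψconc.mul_sub_le_sub_of_hasDerivAt
      (Set.Ioo_subset_Ico_self (he (k + 1) (by omega))) (Set.Ioo_subset_Ico_self (he k hk))
      (he_anti k) (hψderiv _ (he k hk))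
  have hψ_anti : ∀ k, k₀ < k → ψ (e (k + 1)) ≤ ψ (e k) := fun k hk =>
    sub_nonneg.1 ((mul_nonneg (hψpos _ (he k hk)).le (sub_nonneg.2 (he_anti k))).trans (hconc k hk))
  have hwindow : ∀ k, ∑ l ∈ Icc (k - 3 * T + 1) k, ‖X l - X (l - 1)‖ =
      ∑ j ∈ Ico (k - 3 * T) k, a j := fun k => by
    rw [← Ico_add_one_right_eq_Icc, ← sum_Ico_add']; simp [a]
  have hsum : Summable a := by
    refine summable_of_sq_le_mul_sum_Ico (φ := fun k => C / σ * ψ (e k)) (m := 3 * T)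
      (K := k₀ + 1) (fun k => norm_nonneg _)
      (fun k hk => mul_nonneg (by positivity) (hψconc.nonneg_of_hasDerivAt hψ0 (he k hk)
        (hψderiv _ (he k hk)) (hψpos _ (he k hk))))
      (fun k hk => mul_le_mul_of_nonneg_left (hψ_anti k hk) (by positivity)) fun k hk => ?_
    obtain ⟨u, hu, hub⟩ := hrelerr k (by omega)
    rw [hwindow] at hub
    rw [← mul_sub]
    exact sq_le_of_descent_of_kl hσ (hψpos _ (he k hk)) (hdescent k) (hconc k hk)
      (hKL k hk u hu) hub
  exact ⟨hsum, cauchySeq_tendsto_of_complete <|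
    cauchySeq_of_summable_dist (by simpa only [dist_eq_norm'] using hsum)⟩

/-- Whole-sequence convergence under a Kurdyka–Łojasiewicz-type inequality: sufficient
decrease, a relative-error bound on subgradients, convergence of the energies into the band
`(E*, E* + η)`, and the KL inequality with desingularizing function `ψ` imply that the steps
are summable and the sequence converges. -/
theorem stmt9 {V : Type*} [NormedAddCommGroup V] [InnerProductSpace ℝ V]
    [FiniteDimensional ℝ V]
    (E : V → ℝ) (hE : Continuous E) (hEbdd : BddBelow (Set.range E))
    (X : ℕ → V) (hXbdd : Bornology.IsBounded (Set.range X))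
    (σ C : ℝ) (hσ : 0 < σ) (hC : 0 < C)
    (T : ℕ) (hT : 1 ≤ T)
    (Estar η : ℝ) (hη : 0 < η)
    (k₀ : ℕ) (hk₀ : 3 * T < k₀)
    (ψ dψ : ℝ → ℝ)
    (hψ0 : ψ 0 = 0)
    (hψcont : ContinuousOn ψ (Set.Ico 0 η))
    (hψderiv : ∀ t ∈ Set.Ioo (0 : ℝ) η, HasDerivAt ψ (dψ t) t)
    (hψderiv_cont : ContinuousOn dψ (Set.Ioo 0 η))
    (hψconc : ConcaveOn ℝ (Set.Ico 0 η) ψ)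
    (hψpos : ∀ t ∈ Set.Ioo (0 : ℝ) η, 0 < dψ t)
    -- (i) sufficient decrease
    (hdec : ∀ k, E (X k) - E (X (k + 1)) ≥ σ * ‖X (k + 1) - X k‖ ^ 2)
    -- (ii) relative error
    (hrelerr : ∀ k, 3 * T < k → ∃ u : V,
      (∀ y : V, E y ≥ E (X k) + ⟪u, y - X k⟫) ∧
      ‖u‖ ≤ C * ∑ l ∈ Finset.Icc (k - 3 * T + 1) k, ‖X l - X (l - 1)‖)
    -- (iii) energy convergence into the band
    (hElim : Filter.Tendsto (fun k => E (X k)) Filter.atTop (nhds Estar))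
    (hEband : ∀ k, k₀ < k → Estar < E (X k) ∧ E (X k) < Estar + η)
    -- (iv) KL inequality
    (hKL : ∀ k, k₀ < k → ∀ u : V, (∀ y : V, E y ≥ E (X k) + ⟪u, y - X k⟫) →
      dψ (E (X k) - Estar) * ‖u‖ ≥ 1) :
    (Summable fun k => ‖X (k + 1) - X k‖) ∧
      ∃ Xstar : V, Filter.Tendsto X Filter.atTop (nhds Xstar) :=
  stmt9_general E X σ C hσ hC T Estar η k₀ hk₀ ψ dψ hψ0 hψderiv hψconc hψpos hdec hrelerr hEband hKL
end

section
/- Closed-form solution of the constrained proximal subproblem with Euclidean Bregman divergence (case h(x) = ‖x‖²/2): Let N ≥ 1, let D be an N × N real diagonal matrix with nonnegative diagonal entries, let G(φ) = (1/2)⟪φ, Dφ⟫, let e₁ be the first standard basis vector of ℝ^N, let S = { φ ∈ ℝ^N : ⟪e₁, φ⟫ = 0 }, let P₁ = I − e₁e₁ᵀ, let α > 0, v ∈ ℝ^N, and ψ ∈ S. Then the point φ* = (αD + I)⁻¹(ψ − α P₁ v) lies in S and is the unique minimizer over S of the function φ ↦ G(φ) + ⟪v, φ − ψ⟫ + (1/(2α))‖φ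 − ψ‖². -/
/-!
The objective is separable: it is the sum over coordinates of the scalar quadratics
`x ↦ dᵢ x² / 2 + vᵢ (x - ψᵢ) + (x - ψᵢ)² / (2α)`, each with leading coefficient
`dᵢ / 2 + 1 / (2α) > 0` and vertex `(α dᵢ + 1)⁻¹ (ψᵢ - α vᵢ)`. On `S` the first coordinate is pinned
to `0`, which is also the first coordinate of `φ*` because `ψ ∈ S`; every other coordinate of `φ*` is
the vertex. Hence on `S` the objective exceeds its value at `φ*` by
`∑ᵢ (dᵢ / 2 + 1 / (2α)) (φᵢ - φ*ᵢ)²`, which is nonnegative and vanishes only at `φ*`.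
-/

open scoped RealInnerProductSpace

section ProxObjective

variable {ι : Type*} [Fintype ι]

theorem sum_mul_sq_eq_zero_iff {c x : ι → ℝ} (hc : ∀ i, 0 < c i) :
    ∑ i, c i * x i ^ 2 = 0 ↔ ∀ i, x i = 0 := by
  rw [Finset.sum_eq_zero_iff_of_nonneg fun i _ => by have := hc i; positivity]
  simp [(hc _).ne']

theorem quadratic_sub_eq_of_vertex {d α y : ℝ} (hα : α ≠ 0) {v ψ : ℝ}
    (hy : (α * d + 1) * y = ψ - α * v) (x : ℝ) :
    d / 2 * x ^ 2 + v * (x - ψ) + 1 / (2 * α) * (x - ψ) ^ 2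
      - (d / 2 * y ^ 2 + v * (y - ψ) + 1 / (2 * α) * (y - ψ) ^ 2)
      = (d / 2 + 1 / (2 * α)) * (x - y) ^ 2 := by
  field_simp
  linear_combination 2 * (x - y) * hy

noncomputable def proxObjective (d : ι → ℝ) (α : ℝ) (v ψ φ : EuclideanSpace ℝ ι) : ℝ :=
  (1 / 2) * ∑ i, d i * φ i ^ 2 + ⟪v, φ - ψ⟫ + (1 / (2 * α)) * ‖φ - ψ‖ ^ 2

theorem proxObjective_eq_sum (d : ι → ℝ) (α : ℝ) (v ψ φ : EuclideanSpace ℝ ι) :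
    proxObjective d α v ψ φ =
      ∑ i, (d i / 2 * φ i ^ 2 + v i * (φ i - ψ i) + 1 / (2 * α) * (φ i - ψ i) ^ 2) := by
  simp only [proxObjective, PiLp.inner_apply, EuclideanSpace.real_norm_sq_eq, RCLike.inner_apply,
    conj_trivial, PiLp.sub_apply, Finset.mul_sum, ← Finset.sum_add_distrib]
  exact Finset.sum_congr rfl fun i _ => by ring

theorem proxObjective_sub_eq_sum {d : ι → ℝ} {α : ℝ} (hα : α ≠ 0)
    (v ψ φ φ₀ : EuclideanSpace ℝ ι)
    (h : ∀ i, φ i = φ₀ i ∨ (α * d i + 1) * φ₀ i = ψ i - α * v i) :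
    proxObjective d α v ψ φ - proxObjective d α v ψ φ₀ =
      ∑ i, (d i / 2 + 1 / (2 * α)) * (φ i - φ₀ i) ^ 2 := by
  rw [proxObjective_eq_sum, proxObjective_eq_sum, ← Finset.sum_sub_distrib]
  refine Finset.sum_congr rfl fun i _ => ?_
  rcases h i with hi | hi
  · simp [hi]
  · exact quadratic_sub_eq_of_vertex hα hi (φ i)

end ProxObjective

/-- Closed-form solution of the constrained proximal subproblem with Euclidean Bregman
divergence (case `h(x) = ‖x‖²/2`): with `D = diag(d)` (nonnegative entries),
`G(φ) = (1/2)⟪φ, Dφ⟫`, `S = {φ : ⟪e₁, φ⟫ = 0}` and `P₁ = I − e₁e₁ᵀ`, the point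
`φ* = (αD + I)⁻¹(ψ − αP₁v)` lies in `S` and is the unique minimizer over `S` of
`φ ↦ G(φ) + ⟪v, φ − ψ⟫ + (1/(2α))‖φ − ψ‖²`. -/
theorem stmt10 (N : ℕ) (hN : 0 < N)
    (d : Fin N → ℝ) (hd : ∀ i, 0 ≤ d i)
    (α : ℝ) (hα : 0 < α)
    (v ψ : EuclideanSpace ℝ (Fin N))
    (hψ : ψ ⟨0, hN⟩ = 0)
    (φstar : EuclideanSpace ℝ (Fin N))
    (hφstar : ∀ i : Fin N, φstar i = (α * d i + 1)⁻¹ *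
      (ψ i - α * (v i - (if i = ⟨0, hN⟩ then v ⟨0, hN⟩ else 0)))) :
    φstar ⟨0, hN⟩ = 0 ∧
    (∀ φ : EuclideanSpace ℝ (Fin N), φ ⟨0, hN⟩ = 0 →
      (1 / 2) * ∑ i, d i * φstar i ^ 2 + ⟪v, φstar - ψ⟫ + (1 / (2 * α)) * ‖φstar - ψ‖ ^ 2
        ≤ (1 / 2) * ∑ i, d i * φ i ^ 2 + ⟪v, φ - ψ⟫ + (1 / (2 * α)) * ‖φ - ψ‖ ^ 2) ∧
    (∀ φ' : EuclideanSpace ℝ (Fin N), φ' ⟨0, hN⟩ = 0 →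
      (∀ φ : EuclideanSpace ℝ (Fin N), φ ⟨0, hN⟩ = 0 →
        (1 / 2) * ∑ i, d i * φ' i ^ 2 + ⟪v, φ' - ψ⟫ + (1 / (2 * α)) * ‖φ' - ψ‖ ^ 2
          ≤ (1 / 2) * ∑ i, d i * φ i ^ 2 + ⟪v, φ - ψ⟫ + (1 / (2 * α)) * ‖φ - ψ‖ ^ 2) →
      φ' = φstar) := by
  set i₀ : Fin N := ⟨0, hN⟩
  have hmem : φstar i₀ = 0 := by simp [hφstar, hψ]
  have hweight : ∀ i, 0 < d i / 2 + 1 / (2 * α) := fun i => by have := hd i; positivity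
  have hexcess : ∀ φ : EuclideanSpace ℝ (Fin N), φ i₀ = 0 →
      proxObjective d α v ψ φ - proxObjective d α v ψ φstar =
        ∑ i, (d i / 2 + 1 / (2 * α)) * (φ i - φstar i) ^ 2 := by
    intro φ hφ
    refine proxObjective_sub_eq_sum hα.ne' v ψ φ φstar fun i => ?_
    by_cases hi : i = i₀
    · exact .inl (by rw [hi, hφ, hmem])
    · have : α * d i + 1 ≠ 0 := by have := hd i; positivity
      exact .inr (by simp [hφstar, hi, this])
  have hexcess_nonneg (φ : EuclideanSpace ℝ (Fin N)) :
      0 ≤ ∑ i, (d i / 2 + 1 / (2 * α)) * (φ i - φstar i) ^ 2 :=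
    Finset.sum_nonneg fun i _ => by have := hweight i; positivity
  refine ⟨hmem, fun φ hφ => ?_, fun φ' hφ' hmin => ?_⟩
  · show proxObjective d α v ψ φstar ≤ proxObjective d α v ψ φ
    linarith [hexcess φ hφ, hexcess_nonneg φ]
  · have hle : proxObjective d α v ψ φ' ≤ proxObjective d α v ψ φstar := hmin φstar hmem
    have hzero : ∑ i, (d i / 2 + 1 / (2 * α)) * (φ' i - φstar i) ^ 2 = 0 := by
      linarith [hexcess φ' hφ', hexcess_nonneg φ']
    ext i
    exact sub_eq_zero.mp ((sum_mul_sq_eq_zero_iff hweight).mp hzero i)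
end

section
/- Relative smoothness of quartic polynomials with respect to the quartic kernel: Let N ≥ 1 and let f : ℝ^N → ℝ be a polynomial function of total degree at most 4 (the evaluation of a multivariate real polynomial of total degree ≤ 4). Then there exists R > 0 such that the function x ↦ R·( (1/4)‖x‖⁴ + (1/2)‖x‖² ) − f(x) is convex on all of ℝ^N. -/
/-!
The functions `f` for which `R • h ± f` are both convex for some `R` form a subspace. For the
kernel `h x = ‖x‖⁴/4 + ‖x‖²/2` it contains every `(⟪a, x⟫ + c)⁴`: along a line `y = x + t v`
the second derivative of `h` is at least `(‖y‖² + 1) ‖v‖²`, while that of `(⟪a, y⟫ + c)⁴` is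
`12 (⟪a, y⟫ + c)² ⟪a, v⟫² ≤ 24 ‖a‖² (‖a‖² + c²) (‖y‖² + 1) ‖v‖²` by Cauchy–Schwarz. By
polarization a product of four affine forms is a combination of such fourth powers, and padding
with the constant factor `1` writes every monomial of degree at most four as such a product.
-/

open Set
open scoped RealInnerProductSpace

section RelSmooth

variable {E : Type*} [AddCommGroup E] [Module ℝ E]

def relSmoothSubmodule (h : E → ℝ) : Submodule ℝ (E → ℝ) where
  carrier := {f | ∃ R : ℝ, ConvexOn ℝ univ (R • h - f) ∧ ConvexOn ℝ univ (R • h + f)}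
  zero_mem' := ⟨0, by
    simp only [zero_smul, sub_zero, add_zero, and_self]
    exact convexOn_const 0 convex_univ⟩
  add_mem' := by
    rintro f g ⟨R, hf₁, hf₂⟩ ⟨S, hg₁, hg₂⟩
    refine ⟨R + S, ?_, ?_⟩
    · rw [show (R + S) • h - (f + g) = (R • h - f) + (S • h - g) by module]
      exact hf₁.add hg₁
    · rw [show (R + S) • h + (f + g) = (R • h + f) + (S • h + g) by module]
      exact hf₂.add hg₂
  smul_mem' := by
    rintro c f ⟨R, hf₁, hf₂⟩
    rcases le_total 0 c with hc | hc
    · refine ⟨c * R, ?_, ?_⟩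
      · rw [show (c * R) • h - c • f = c • (R • h - f) by module]
        exact hf₁.smul hc
      · rw [show (c * R) • h + c • f = c • (R • h + f) by module]
        exact hf₂.smul hc
    · refine ⟨-c * R, ?_, ?_⟩
      · rw [show (-c * R) • h - c • f = (-c) • (R • h + f) by module]
        exact hf₂.smul (neg_nonneg.2 hc)
      · rw [show (-c * R) • h + c • f = (-c) • (R • h - f) by module]
        exact hf₁.smul (neg_nonneg.2 hc)

theorem exists_pos_convexOn_sub_of_mem_relSmoothSubmodule {h f : E → ℝ}
    (hh : ConvexOn ℝ univ h) (hf : f ∈ relSmoothSubmodule h) :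
    ∃ R : ℝ, 0 < R ∧ ConvexOn ℝ univ (R • h - f) := by
  obtain ⟨R, hR, -⟩ := hf
  refine ⟨max R 1, by positivity, ?_⟩
  rw [show max R 1 • h - f = (max R 1 - R) • h + (R • h - f) by module]
  exact (hh.smul (sub_nonneg.2 (le_max_left R 1))).add hR

theorem convexOn_univ_of_forall_convexOn_line {F : E → ℝ}
    (hF : ∀ x v : E, ConvexOn ℝ univ fun t : ℝ => F (x + t • v)) : ConvexOn ℝ univ F := by
  refine ⟨convex_univ, fun x _ y _ a b ha hb hab => ?_⟩
  have h := (hF x (y - x)).2 (mem_univ 0) (mem_univ 1) ha hb hab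
  obtain rfl : a = 1 - b := eq_sub_of_add_eq hab
  simp only [smul_eq_mul, mul_zero, mul_one, zero_add, zero_smul, add_zero, one_smul,
    add_sub_cancel] at h
  rwa [show (1 - b) • x + b • y = x + b • (y - x) by module]

end RelSmooth

theorem convexOn_univ_of_hasDerivAt2_nonneg {f f' f'' : ℝ → ℝ}
    (hf : ∀ t, HasDerivAt f (f' t) t) (hf' : ∀ t, HasDerivAt f' (f'' t) t)
    (hf'' : ∀ t, 0 ≤ f'' t) : ConvexOn ℝ univ f :=
  convexOn_of_hasDerivWithinAt2_nonneg convex_univ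
    (fun t _ => (hf t).continuousAt.continuousWithinAt)
    (fun t _ => (hf t).hasDerivWithinAt) (fun t _ => (hf' t).hasDerivWithinAt) fun t _ => hf'' t

theorem hasDerivAt_line {E : Type*} [NormedAddCommGroup E] [NormedSpace ℝ E] (x v : E) (t : ℝ) :
    HasDerivAt (fun t : ℝ => x + t • v) v t := by
  simpa using ((hasDerivAt_id t).smul_const v).const_add x

section Kernel

variable {E : Type*} [NormedAddCommGroup E] [InnerProductSpace ℝ E]

noncomputable def quarticKernel (x : E) : ℝ := 1 / 4 * ‖x‖ ^ 4 + 1 / 2 * ‖x‖ ^ 2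

theorem convexOn_quarticKernel : ConvexOn ℝ univ (quarticKernel : E → ℝ) := by
  have hpow (n : ℕ) : ConvexOn ℝ univ fun x : E => ‖x‖ ^ n :=
    (convexOn_norm convex_univ).pow (fun x _ => norm_nonneg x) n
  exact ((hpow 4).smul (by norm_num)).add ((hpow 2).smul (by norm_num))

theorem hasDerivAt_quarticKernel_line (x v : E) (t : ℝ) :
    HasDerivAt (fun t : ℝ => quarticKernel (x + t • v))
      ((‖x + t • v‖ ^ 2 + 1) * ⟪x + t • v, v⟫) t := by
  have h := (hasDerivAt_line x v t).norm_sq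
  have hK : (fun t : ℝ => quarticKernel (x + t • v))
      = fun t => 1 / 4 * (‖x + t • v‖ ^ 2) ^ 2 + 1 / 2 * ‖x + t • v‖ ^ 2 := by
    ext s; simp only [quarticKernel]; ring
  rw [hK]
  refine (((h.pow 2).const_mul (1 / 4 : ℝ)).add (h.const_mul (1 / 2 : ℝ))).congr_deriv ?_
  ring

theorem hasDerivAt_deriv_quarticKernel_line (x v : E) (t : ℝ) :
    HasDerivAt (fun t : ℝ => (‖x + t • v‖ ^ 2 + 1) * ⟪x + t • v, v⟫)
      (2 * ⟪x + t • v, v⟫ ^ 2 + (‖x + t • v‖ ^ 2 + 1) * ‖v‖ ^ 2) t := by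
  have hy := hasDerivAt_line x v t
  refine ((hy.norm_sq.add_const 1).mul (hy.inner ℝ (hasDerivAt_const t v))).congr_deriv ?_
  rw [inner_zero_right, zero_add, real_inner_self_eq_norm_sq]
  ring

theorem hasDerivAt_affine_line (a x v : E) (c t : ℝ) :
    HasDerivAt (fun t : ℝ => ⟪a, x + t • v⟫ + c) ⟪a, v⟫ t := by
  simpa using ((hasDerivAt_const t a).inner ℝ (hasDerivAt_line x v t)).add_const c

theorem sq_inner_add_mul_sq_inner_le (a y v : E) (c : ℝ) :
    (⟪a, y⟫ + c) ^ 2 * ⟪a, v⟫ ^ 2 ≤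
      2 * ‖a‖ ^ 2 * (‖a‖ ^ 2 + c ^ 2) * ((‖y‖ ^ 2 + 1) * ‖v‖ ^ 2) := by
  have hy : ⟪a, y⟫ ^ 2 ≤ ‖a‖ ^ 2 * ‖y‖ ^ 2 := by
    rw [← mul_pow, ← sq_abs]; gcongr; exact abs_real_inner_le_norm a y
  have hv : ⟪a, v⟫ ^ 2 ≤ ‖a‖ ^ 2 * ‖v‖ ^ 2 := by
    rw [← mul_pow, ← sq_abs]; gcongr; exact abs_real_inner_le_norm a v
  have hyc : (⟪a, y⟫ + c) ^ 2 ≤ 2 * (‖a‖ ^ 2 + c ^ 2) * (‖y‖ ^ 2 + 1) := by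
    nlinarith [sq_nonneg (⟪a, y⟫ - c), sq_nonneg ‖a‖, sq_nonneg ‖y‖, sq_nonneg c]
  calc (⟪a, y⟫ + c) ^ 2 * ⟪a, v⟫ ^ 2
      ≤ (2 * (‖a‖ ^ 2 + c ^ 2) * (‖y‖ ^ 2 + 1)) * (‖a‖ ^ 2 * ‖v‖ ^ 2) := by gcongr
    _ = _ := by ring

theorem convexOn_mul_quarticKernel_sub_mul_affine_pow_four (a : E) (c σ : ℝ) (hσ : |σ| ≤ 1) :
    ConvexOn ℝ univ fun x : E =>
      24 * ‖a‖ ^ 2 * (‖a‖ ^ 2 + c ^ 2) * quarticKernel x - σ * (⟪a, x⟫ + c) ^ 4 := by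
  set R := 24 * ‖a‖ ^ 2 * (‖a‖ ^ 2 + c ^ 2)
  refine convexOn_univ_of_forall_convexOn_line fun x v => ?_
  have hℓ (t : ℝ) := hasDerivAt_affine_line a x v c t
  refine convexOn_univ_of_hasDerivAt2_nonneg
    (f' := fun t => R * ((‖x + t • v‖ ^ 2 + 1) * ⟪x + t • v, v⟫)
      - σ * (4 * (⟪a, x + t • v⟫ + c) ^ 3 * ⟪a, v⟫))
    (f'' := fun t => R * (2 * ⟪x + t • v, v⟫ ^ 2 + (‖x + t • v‖ ^ 2 + 1) * ‖v‖ ^ 2)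
      - σ * (12 * (⟪a, x + t • v⟫ + c) ^ 2 * ⟪a, v⟫ ^ 2)) (fun t => ?_) (fun t => ?_) (fun t => ?_)
  · refine (((hasDerivAt_quarticKernel_line x v t).const_mul R).sub
      (((hℓ t).pow 4).const_mul σ)).congr_deriv ?_
    ring
  · refine (((hasDerivAt_deriv_quarticKernel_line x v t).const_mul R).sub
      (((((hℓ t).pow 3).const_mul 4).mul_const ⟪a, v⟫).const_mul σ)).congr_deriv ?_
    ring
  · set y := x + t • v
    refine sub_nonneg.2 ?_
    calc σ * (12 * (⟪a, y⟫ + c) ^ 2 * ⟪a, v⟫ ^ 2)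
        ≤ 12 * (⟪a, y⟫ + c) ^ 2 * ⟪a, v⟫ ^ 2 :=
          mul_le_of_le_one_left (by positivity) ((le_abs_self σ).trans hσ)
      _ ≤ R * ((‖y‖ ^ 2 + 1) * ‖v‖ ^ 2) := by
          linarith [sq_inner_add_mul_sq_inner_le a y v c]
      _ ≤ R * (2 * ⟪y, v⟫ ^ 2 + (‖y‖ ^ 2 + 1) * ‖v‖ ^ 2) := by
          gcongr; exact le_add_of_nonneg_left (by positivity)

theorem affine_pow_four_mem_relSmoothSubmodule (a : E) (c : ℝ) :
    (fun x : E => (⟪a, x⟫ + c) ^ 4) ∈ relSmoothSubmodule quarticKernel := by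
  refine ⟨24 * ‖a‖ ^ 2 * (‖a‖ ^ 2 + c ^ 2), ?_, ?_⟩
  · refine (convexOn_mul_quarticKernel_sub_mul_affine_pow_four a c 1 (by simp)).congr
      fun x _ => ?_
    simp
  · refine (convexOn_mul_quarticKernel_sub_mul_affine_pow_four a c (-1) (by simp)).congr
      fun x _ => ?_
    simp

end Kernel

section Polynomial

variable {E : Type*} [NormedAddCommGroup E] [InnerProductSpace ℝ E]

theorem affine_mul_four_mem_relSmoothSubmodule (a₁ a₂ a₃ a₄ : E) (c₁ c₂ c₃ c₄ : ℝ) :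
    (fun x : E => (⟪a₁, x⟫ + c₁) * (⟪a₂, x⟫ + c₂) * (⟪a₃, x⟫ + c₃) * (⟪a₄, x⟫ + c₄)) ∈
      relSmoothSubmodule quarticKernel := by
  set P : ℝ → ℝ → ℝ → E → ℝ := fun ε₂ ε₃ ε₄ x =>
    ((⟪a₁, x⟫ + c₁) + ε₂ * (⟪a₂, x⟫ + c₂) + ε₃ * (⟪a₃, x⟫ + c₃) + ε₄ * (⟪a₄, x⟫ + c₄)) ^ 4
  have hP (ε₂ ε₃ ε₄ : ℝ) : P ε₂ ε₃ ε₄ ∈ relSmoothSubmodule quarticKernel := by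
    convert affine_pow_four_mem_relSmoothSubmodule (a₁ + ε₂ • a₂ + ε₃ • a₃ + ε₄ • a₄)
      (c₁ + ε₂ * c₂ + ε₃ * c₃ + ε₄ * c₄) using 2 with x
    simp only [P, inner_add_left, real_inner_smul_left]
    ring
  -- polarization: `192 ℓ₁ ℓ₂ ℓ₃ ℓ₄ = ∑ ε₂ ε₃ ε₄ (ℓ₁ + ε₂ ℓ₂ + ε₃ ℓ₃ + ε₄ ℓ₄)⁴` over `ε ∈ {±1}³`
  have hcomb : (1 / 192 : ℝ) • (P 1 1 1 - P 1 1 (-1) - P 1 (-1) 1 + P 1 (-1) (-1)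
      - P (-1) 1 1 + P (-1) 1 (-1) + P (-1) (-1) 1 - P (-1) (-1) (-1)) ∈
        relSmoothSubmodule quarticKernel := by
    apply_rules [Submodule.add_mem, Submodule.sub_mem, Submodule.neg_mem, Submodule.smul_mem]
  convert hcomb using 1
  ext x
  simp only [P, Pi.smul_apply, Pi.add_apply, Pi.sub_apply, smul_eq_mul]
  ring

theorem prod_affine_mem_relSmoothSubmodule (l : List (E × ℝ)) (hl : l.length ≤ 4) :
    (fun x : E => (l.map fun p => ⟪p.1, x⟫ + p.2).prod) ∈ relSmoothSubmodule quarticKernel := by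
  obtain ⟨p₁, p₂, p₃, p₄, hp⟩ :=
    (List.length_eq_four (l := l ++ List.replicate (4 - l.length) ((0 : E), (1 : ℝ)))).1
      (by simp only [List.length_append, List.length_replicate]; omega)
  convert affine_mul_four_mem_relSmoothSubmodule p₁.1 p₂.1 p₃.1 p₄.1 p₁.2 p₂.2 p₃.2 p₄.2
    using 1
  ext x
  have := congrArg (fun l => (l.map fun p : E × ℝ => ⟪p.1, x⟫ + p.2).prod) hp
  simp only [List.map_append, List.map_replicate, inner_zero_left, zero_add, List.prod_append,
    List.prod_replicate, one_pow, mul_one, List.map_cons, List.map_nil, List.prod_cons,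
    List.prod_nil] at this
  rw [this]
  ring

theorem prod_inner_pow_mem_relSmoothSubmodule {ι : Type*} (e : ι → E) (α : ι →₀ ℕ)
    (hα : (α.sum fun _ k => k) ≤ 4) :
    (fun x : E => α.prod fun i k => ⟪e i, x⟫ ^ k) ∈ relSmoothSubmodule quarticKernel := by
  convert prod_affine_mem_relSmoothSubmodule (α.toMultiset.toList.map fun i => (e i, 0))
    (by simpa [Function.id_def] using hα) using 1
  ext x
  have hℓ : ((fun p : E × ℝ => ⟪p.1, x⟫ + p.2) ∘ fun i => (e i, 0)) = fun i => ⟪e i, x⟫ := by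
    ext i; simp
  rw [List.map_map, hℓ, ← Multiset.prod_coe, ← Multiset.map_coe, Multiset.coe_toList,
    Finsupp.toMultiset_map, Finsupp.prod_toMultiset, Finsupp.prod_mapDomain_index pow_zero pow_add]

theorem eval_inner_mem_relSmoothSubmodule {ι : Type*} (e : ι → E) (p : MvPolynomial ι ℝ)
    (hp : p.totalDegree ≤ 4) :
    (fun x : E => MvPolynomial.eval (fun i => ⟪e i, x⟫) p) ∈ relSmoothSubmodule quarticKernel := by
  have hsum : (fun x : E => MvPolynomial.eval (fun i => ⟪e i, x⟫) p) =
      ∑ α ∈ p.support, p.coeff α • fun x : E => α.prod fun i k => ⟪e i, x⟫ ^ k := by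
    ext x
    simp [MvPolynomial.eval_eq, Finsupp.prod]
  rw [hsum]
  exact Submodule.sum_mem _ fun α hα => Submodule.smul_mem _ _ <|
    prod_inner_pow_mem_relSmoothSubmodule e α ((MvPolynomial.le_totalDegree hα).trans hp)

end Polynomial

theorem stmt12_general (N : ℕ)
    (p : MvPolynomial (Fin N) ℝ) (hp : p.totalDegree ≤ 4) :
    ∃ R : ℝ, 0 < R ∧ ConvexOn ℝ Set.univ (fun x : EuclideanSpace ℝ (Fin N) =>
      R * ((1 / 4) * ‖x‖ ^ 4 + (1 / 2) * ‖x‖ ^ 2) - MvPolynomial.eval (fun i => x i) p) := by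
  have hp_mem := eval_inner_mem_relSmoothSubmodule (fun i => EuclideanSpace.single i (1 : ℝ)) p hp
  simp only [EuclideanSpace.inner_single_left, map_one, one_mul] at hp_mem
  exact exists_pos_convexOn_sub_of_mem_relSmoothSubmodule convexOn_quarticKernel hp_mem

/-- Relative smoothness of quartic polynomials with respect to the quartic kernel
`h(x) = (1/4)‖x‖⁴ + (1/2)‖x‖²`: for every real polynomial `p` in `N` variables of total
degree at most `4`, there exists `R > 0` such that `x ↦ R·h(x) − p(x)` is convex on `ℝ^N`. -/
theorem stmt12 (N : ℕ) (hN : 1 ≤ N)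
    (p : MvPolynomial (Fin N) ℝ) (hp : p.totalDegree ≤ 4) :
    ∃ R : ℝ, 0 < R ∧ ConvexOn ℝ Set.univ (fun x : EuclideanSpace ℝ (Fin N) =>
      R * ((1 / 4) * ‖x‖ ^ 4 + (1 / 2) * ‖x‖ ^ 2) - MvPolynomial.eval (fun i => x i) p) :=
  stmt12_general N p hp
end
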